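/- Let K/ℚ be Galois with group G, α a primitive element, χ a non-trivial absolutely irreducible character of degree 1 and order l of G, and C(χ) the rational central idempotent ∑_{σ ∈ Gal(ℚ(ζ_l)/ℚ)} c_{σ∘χ}. Define LR(χ) = {M ∈ ℚ[G] : M = M·C(χ), M·(∑_g g(α)g^{-1}) = 0}. Then LR(χ) ≠ {0} if and only if ∑_{g∈G} χ(g)^d g(α) = 0 for every integer d coprime to l; and in that case LR(χ) = {∑_g Tr_{ℚ(ζ_l)/ℚ}(m·conj(χ(g))) g : m ∈ ℚ(ζ_l)}, which has ℚ-dimension [ℚ(ζ_l):ℚ] = φ(l). -/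

import Mathlib

/-!
Let `ψ` be `χ` viewed with values in `L = ℚ(χ) = ℚ(ζ_l)` and `Φ c = (Tr_{L/ℚ}(c ψ(g)⁻¹))_g`.
The conjugates `σ ∘ ψ`, `σ ∈ Gal(L/ℚ)`, are pairwise distinct characters of `G`, so orthogonality
gives `∑_g Φ(c)_g ψ(g) = |G| c`: `Φ` is injective and `m ↦ Φ(|G|⁻¹ ∑_g m_g ψ(g))` is right
multiplication by `C(χ)`. Hence `M = M C(χ)` means exactly `M = Φ c` for some `c`.
Expanding the trace over `Gal(L/ℚ) ≅ (ℤ/l)ˣ` writes the coefficients of `Φ(c) ∑_g g(α) g⁻¹` through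
the resolvents `R_σ = ∑_g σ(ψ(g⁻¹)) g(α) = ∑_g χ(g)^d g(α)` (`d` prime to `l`), so they vanish when
all `R_σ` do. Conversely, pairing `M ∑_g g(α) g⁻¹ = 0` with `σ ∘ ψ` gives `σ(|G| c) R_σ = 0`, so a
non-zero `M` forces every `R_σ` to vanish.
-/

open Finset MonoidAlgebra Polynomial

theorem zpow_eq_zpow_emod₀ {G₀ : Type*} [GroupWithZero G₀] {x : G₀} (m : ℤ) {n : ℕ} (hn : n ≠ 0)
    (h : x ^ n = 1) : x ^ m = x ^ (m % n) := by
  have hx : x ≠ 0 := by rintro rfl; simp [zero_pow hn] at h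
  calc x ^ m = x ^ (m % n + n * (m / n)) := by rw [Int.emod_add_mul_ediv]
    _ = x ^ (m % n) := by rw [zpow_add₀ hx, zpow_mul, zpow_natCast, h, one_zpow, mul_one]

namespace MonoidAlgebra

variable {R G : Type*} [Semiring R] [Fintype G]

theorem coeff_sum_single (a : G → R) (k : G) : (∑ h, single h (a h)).coeff k = a k := by
  classical
  simp [coeff_sum, Finsupp.single_apply]

theorem sum_single_inj {a b : G → R} :
    ∑ h, single h (a h) = ∑ h, single h (b h) ↔ a = b := by
  refine ⟨fun h => funext fun k => ?_, fun h => h ▸ rfl⟩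
  simpa only [coeff_sum_single] using congr_arg (coeff · k) h

theorem sum_single_eq_zero {a : G → R} : ∑ h, single h (a h) = 0 ↔ a = 0 := by
  simpa using sum_single_inj (b := (0 : G → R))

variable [Group G]

theorem sum_single_mul_sum_single (a b : G → R) :
    (∑ h, single h (a h)) * ∑ g, single g (b g) = ∑ k, single k (∑ g, a (k * g⁻¹) * b g) := by
  have hg (g : G) : ∑ h, single (h * g) (a h * b g) = ∑ k, single k (a (k * g⁻¹) * b g) :=
    Fintype.sum_equiv (Equiv.mulRight g) _ _ fun h => by simp
  simp_rw [sum_mul_sum, single_mul_single]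
  rw [sum_comm]
  simp_rw [hg]
  rw [sum_comm]
  exact sum_congr rfl fun k _ => (map_sum (singleAddHom k) _ _).symm

theorem sum_single_mul_sum_single_inv (a b : G → R) :
    (∑ h, single h (a h)) * ∑ g, single g⁻¹ (b g) = ∑ k, single k (∑ g, a (k * g) * b g) := by
  have hinv : ∑ g, single g⁻¹ (b g) = ∑ g, single g (b g⁻¹) :=
    Fintype.sum_equiv (Equiv.inv G) _ _ fun g => by simp
  rw [hinv, sum_single_mul_sum_single]
  refine sum_congr rfl fun k _ => congr_arg _ ?_
  exact Fintype.sum_equiv (Equiv.inv G) _ _ fun g => by simp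

end MonoidAlgebra

theorem IntermediateField.adjoin_eq_adjoin_of_isPrimitiveRoot {K E : Type*} [Field K] [Field E]
    [Algebra K E] {s : Set E} {ζ : E} {n : ℕ} [NeZero n] (hζ : IsPrimitiveRoot ζ n) (hζs : ζ ∈ s)
    (hs : ∀ x ∈ s, x ^ n = 1) : adjoin K s = adjoin K {ζ} := by
  refine le_antisymm (adjoin_le_iff.2 fun x hx => ?_)
    (adjoin_simple_le_iff.2 (subset_adjoin K s hζs))
  obtain ⟨i, -, rfl⟩ := hζ.eq_pow_of_pow_eq_one (hs x hx)
  exact pow_mem (mem_adjoin_simple_self K ζ) i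

theorem IsPrimitiveRoot.isCyclotomicExtension_adjoin {K E : Type*} [Field K] [Field E]
    [Algebra K E] {s : Set E} {ζ : E} {n : ℕ} [NeZero n] (hζ : IsPrimitiveRoot ζ n) (hζs : ζ ∈ s)
    (hs : ∀ x ∈ s, x ^ n = 1) : IsCyclotomicExtension {n} K (IntermediateField.adjoin K s) := by
  rw [IntermediateField.adjoin_eq_adjoin_of_isPrimitiveRoot hζ hζs hs]
  change IsCyclotomicExtension {n} K (IntermediateField.adjoin K {ζ}).toSubalgebra
  rw [IntermediateField.adjoin_simple_toSubalgebra_of_isAlgebraic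
    ((hζ.isIntegral (NeZero.pos n)).tower_top (A := K)).isAlgebraic]
  exact hζ.adjoin_isCyclotomicExtension K

namespace IsCyclotomicExtension

variable {n : ℕ} [NeZero n] {K L : Type*} [Field K] [Field L] [Algebra K L]
  [IsCyclotomicExtension {n} K L]

theorem algEquiv_apply_eq_pow_autToPow (σ : L ≃ₐ[K] L) {x : L} (hx : x ^ n = 1) :
    σ x = x ^ ((zeta_spec n K L).autToPow K σ : ZMod n).val := by
  obtain ⟨i, -, rfl⟩ := (zeta_spec n K L).eq_pow_of_pow_eq_one hx
  rw [map_pow, ← (zeta_spec n K L).autToPow_spec K σ, pow_right_comm]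

theorem exists_isCoprime_algEquiv_apply_eq_zpow (σ : L ≃ₐ[K] L) :
    ∃ d : ℤ, IsCoprime d n ∧ ∀ x : L, x ^ n = 1 → σ x = x ^ d :=
  ⟨_, Nat.isCoprime_iff_coprime.2 (ZMod.val_coe_unit_coprime _), fun x hx => by
    rw [zpow_natCast]; exact algEquiv_apply_eq_pow_autToPow σ hx⟩

theorem exists_algEquiv_apply_eq_zpow (hirr : Irreducible (cyclotomic n K)) {d : ℤ}
    (hd : IsCoprime d n) : ∃ σ : L ≃ₐ[K] L, ∀ x : L, x ^ n = 1 → σ x = x ^ d := by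
  let σ := (autEquivPow L hirr).symm (ZMod.unitOfIsCoprime d hd)
  have hσ : (zeta_spec n K L).autToPow K σ = ZMod.unitOfIsCoprime d hd :=
    (autEquivPow L hirr).apply_symm_apply _
  refine ⟨σ, fun x hx => ?_⟩
  rw [algEquiv_apply_eq_pow_autToPow σ hx, hσ, ZMod.coe_unitOfIsCoprime, ← zpow_natCast,
    ZMod.val_intCast, ← zpow_eq_zpow_emod₀ d (NeZero.ne n) hx]

end IsCyclotomicExtension

section TraceCoeffs

variable (F : Type*) {L G : Type*} [Field F] [Field L] [Algebra F L] [Group G]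

noncomputable def traceCoeffs (ψ : G →* L) : L →ₗ[F] G → F where
  toFun c g := Algebra.trace F L (c * ψ g⁻¹)
  map_add' c c' := by ext; simp [add_mul]
  map_smul' r c := by ext; simp

theorem traceCoeffs_apply (ψ : G →* L) (c : L) (g : G) :
    traceCoeffs F ψ c g = Algebra.trace F L (c * ψ g⁻¹) := rfl

variable [Fintype G]

/-- The paper's `C(χ) = ∑_τ c_{τ ∘ χ}`: the coefficient of `g` is
`|G|⁻¹ ∑_τ τ(ψ(g⁻¹)) = |G|⁻¹ Tr(ψ(g⁻¹))`. -/
noncomputable def traceIdempotent (ψ : G →* L) : MonoidAlgebra F G :=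
  (Fintype.card G : F)⁻¹ • ∑ g, single g (Algebra.trace F L (ψ g⁻¹))

variable {F}

theorem traceCoeffs_linearCombination (ψ : G →* L) (m : G → F) (k : G) :
    traceCoeffs F ψ (Fintype.linearCombination F ψ m) k =
      ∑ g, m (k * g⁻¹) * traceCoeffs F ψ 1 g := by
  simp only [traceCoeffs_apply, Fintype.linearCombination_apply, sum_mul, map_sum,
    smul_mul_assoc, map_smul, smul_eq_mul, one_mul]
  refine Fintype.sum_equiv ((Equiv.inv G).trans (Equiv.mulRight k)) _ _ fun h => ?_
  simp [mul_comm]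

theorem sum_single_traceCoeffs_linearCombination (ψ : G →* L) (m : G → F) :
    ∑ k, single k (traceCoeffs F ψ ((Fintype.card G : F)⁻¹ • Fintype.linearCombination F ψ m) k) =
      (∑ h, single h (m h)) * traceIdempotent F ψ := by
  simp_rw [traceIdempotent, mul_smul_comm, sum_single_mul_sum_single, smul_sum, smul_single,
    map_smul, Pi.smul_apply, traceCoeffs_linearCombination, traceCoeffs_apply, one_mul]

theorem sum_algEquiv_apply_inv_mul_eq_zero {ψ : G →* L}
    (hψ : Algebra.adjoin F (Set.range ψ) = ⊤) {σ : L ≃ₐ[F] L} (hσ : σ ≠ 1) :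
    ∑ h, σ (ψ h⁻¹) * ψ h = 0 := by
  let θ : G →* L :=
    { toFun h := σ (ψ h⁻¹) * ψ h
      map_one' := by simp
      map_mul' g h := by simp only [mul_inv_rev, map_mul]; ring }
  refine sum_hom_units_eq_zero θ fun hθ => hσ ?_
  have hfix (h : G) : σ (ψ h) = ψ h := by
    have hθh : σ (ψ h) * ψ h⁻¹ = 1 := by
      simpa only [θ, MonoidHom.coe_mk, OneHom.coe_mk, MonoidHom.one_apply, inv_inv]
        using DFunLike.congr_fun hθ h⁻¹
    exact left_inv_eq_right_inv hθh (by rw [← map_mul, inv_mul_cancel, map_one])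
  exact AlgEquiv.coe_toAlgHom_injective <|
    AlgHom.ext_of_adjoin_eq_top hψ (by rintro _ ⟨h, rfl⟩; exact hfix h)

variable [FiniteDimensional F L] [IsGalois F L]

theorem linearCombination_traceCoeffs {ψ : G →* L} (hψ : Algebra.adjoin F (Set.range ψ) = ⊤)
    (c : L) : Fintype.linearCombination F ψ (traceCoeffs F ψ c) = Fintype.card G • c := by
  simp_rw [Fintype.linearCombination_apply, traceCoeffs_apply, Algebra.smul_def,
    trace_eq_sum_automorphisms, sum_mul, map_mul]
  rw [sum_comm]
  simp_rw [mul_assoc, ← mul_sum]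
  rw [sum_eq_single_of_mem 1 (mem_univ _) fun σ _ hσ => by
    rw [sum_algEquiv_apply_inv_mul_eq_zero hψ hσ, mul_zero]]
  simp only [AlgEquiv.one_apply, ← map_mul, inv_mul_cancel, map_one, sum_const, card_univ]
  simp [mul_comm]

theorem leftInverse_traceCoeffs [CharZero F] {ψ : G →* L}
    (hψ : Algebra.adjoin F (Set.range ψ) = ⊤) :
    Function.LeftInverse (fun m => (Fintype.card G : F)⁻¹ • Fintype.linearCombination F ψ m)
      (traceCoeffs F ψ) := fun c => by
  simp [linearCombination_traceCoeffs hψ, ← Nat.cast_smul_eq_nsmul F, smul_smul]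

theorem mem_range_traceCoeffs_iff [CharZero F] {ψ : G →* L}
    (hψ : Algebra.adjoin F (Set.range ψ) = ⊤) (m : G → F) :
    m ∈ Set.range (traceCoeffs F ψ) ↔
      ∑ h, single h (m h) = (∑ h, single h (m h)) * traceIdempotent F ψ := by
  rw [← sum_single_traceCoeffs_linearCombination, sum_single_inj]
  constructor
  · rintro ⟨c, rfl⟩
    exact congr_arg _ (leftInverse_traceCoeffs hψ c).symm
  · exact fun h => ⟨_, h.symm⟩

end TraceCoeffs

section LagrangeResolvent

variable {F L G E : Type*} [Field F] [Field L] [Algebra F L] [Group G] [Fintype G]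
  [Field E] [Algebra L E]

noncomputable def lagrangeResolvent (ψ : G →* L) (a : G → E) (σ : L ≃ₐ[F] L) : E :=
  ∑ g, algebraMap L E (σ (ψ g⁻¹)) * a g

theorem lagrangeResolvent_eq_sum_zpow {ψ : G →* L} {a : G → E} {σ : L ≃ₐ[F] L} {n : ℕ} {d : ℤ}
    (hψ : ∀ g, ψ g ^ n = 1) (hσ : ∀ x : L, x ^ n = 1 → σ x = x ^ d) :
    lagrangeResolvent ψ a σ = ∑ g, algebraMap L E (ψ g) ^ (-d) * a g := by
  simp_rw [lagrangeResolvent, hσ _ (hψ _), map_inv, inv_zpow', map_zpow₀]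

theorem forall_lagrangeResolvent_eq_zero_iff {n : ℕ} [NeZero n] [IsCyclotomicExtension {n} F L]
    (hirr : Irreducible (cyclotomic n F)) {ψ : G →* L} (hψ : ∀ g, ψ g ^ n = 1) (a : G → E) :
    (∀ σ : L ≃ₐ[F] L, lagrangeResolvent ψ a σ = 0) ↔
      ∀ d : ℤ, IsCoprime d n → ∑ g, algebraMap L E (ψ g) ^ d * a g = 0 := by
  refine ⟨fun h d hd => ?_, fun h σ => ?_⟩
  · obtain ⟨σ, hσ⟩ := IsCyclotomicExtension.exists_algEquiv_apply_eq_zpow (L := L) hirr hd.neg_left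
    simpa [lagrangeResolvent_eq_sum_zpow hψ hσ] using h σ
  · obtain ⟨d, hd, hσ⟩ := IsCyclotomicExtension.exists_isCoprime_algEquiv_apply_eq_zpow (n := n) σ
    rw [lagrangeResolvent_eq_sum_zpow hψ hσ]
    exact h _ hd.neg_left

variable [Algebra F E] [IsScalarTower F L E]

theorem algebraMap_mul_lagrangeResolvent (ψ : G →* L) (a : G → E) (m : G → F) (σ : L ≃ₐ[F] L) :
    algebraMap L E (σ (Fintype.linearCombination F ψ m)) * lagrangeResolvent ψ a σ =
      ∑ k, algebraMap L E (σ (ψ k)) * ∑ g, algebraMap F E (m (k * g)) * a g := by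
  have hg (g : G) : ∑ k, algebraMap L E (σ (ψ k)) * (algebraMap F E (m (k * g)) * a g) =
      ∑ h, algebraMap L E (σ (ψ (h * g⁻¹))) * (algebraMap F E (m h) * a g) :=
    Fintype.sum_equiv (Equiv.mulRight g) _ _ fun k => by simp
  simp_rw [Fintype.linearCombination_apply, lagrangeResolvent, map_sum, map_smul, Algebra.smul_def,
    map_mul, ← IsScalarTower.algebraMap_apply, sum_mul_sum, mul_sum]
  conv_rhs => rw [sum_comm]; simp only [hg]
  rw [sum_comm]
  refine sum_congr rfl fun h _ => sum_congr rfl fun g _ => ?_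
  rw [map_mul, map_mul, map_mul]
  ring

theorem lagrangeResolvent_eq_zero {ψ : G →* L} {a : G → E} {m : G → F}
    (hm : ∀ k, ∑ g, algebraMap F E (m (k * g)) * a g = 0)
    (hm0 : Fintype.linearCombination F ψ m ≠ 0) (σ : L ≃ₐ[F] L) : lagrangeResolvent ψ a σ = 0 := by
  have h := algebraMap_mul_lagrangeResolvent ψ a m σ
  simp only [hm, mul_zero, sum_const_zero] at h
  exact (mul_eq_zero.mp h).resolve_left (by simpa using hm0)

variable [FiniteDimensional F L] [IsGalois F L]

theorem algebraMap_trace_eq_sum (x : L) :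
    algebraMap F E (Algebra.trace F L x) = ∑ σ : L ≃ₐ[F] L, algebraMap L E (σ x) := by
  rw [IsScalarTower.algebraMap_apply F L E, trace_eq_sum_automorphisms, map_sum]

theorem sum_traceCoeffs_mul (ψ : G →* L) (a : G → E) (c : L) (k : G) :
    ∑ g, algebraMap F E (traceCoeffs F ψ c (k * g)) * a g =
      ∑ σ : L ≃ₐ[F] L, algebraMap L E (σ (c * ψ k⁻¹)) * lagrangeResolvent ψ a σ := by
  simp_rw [traceCoeffs_apply, algebraMap_trace_eq_sum, lagrangeResolvent, mul_sum, sum_mul]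
  rw [sum_comm]
  refine sum_congr rfl fun σ _ => sum_congr rfl fun g _ => ?_
  simp only [mul_inv_rev, map_mul]
  ring

theorem sum_traceCoeffs_mul_eq_zero {ψ : G →* L} {a : G → E}
    (h : ∀ σ : L ≃ₐ[F] L, lagrangeResolvent ψ a σ = 0) (c : L) (k : G) :
    ∑ g, algebraMap F E (traceCoeffs F ψ c (k * g)) * a g = 0 := by
  simp [sum_traceCoeffs_mul, h]

end LagrangeResolvent

theorem stmt_10_general (K₀ : IntermediateField ℚ ℂ) [FiniteDimensional ℚ ↥K₀]
    (α : ↥K₀)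
    (l : ℕ) (hl : 1 < l)
    (χ : (↥K₀ ≃ₐ[ℚ] ↥K₀) →* ℂ)
    (hχl : ∀ g, χ g ^ l = 1)
    (hχord : ∃ g, IsPrimitiveRoot (χ g) l)
    (L : IntermediateField ℚ ℂ)
    (hL : L = IntermediateField.adjoin ℚ (Set.range χ))
    (hmem : ∀ g, χ g ∈ L)
    (CQ : MonoidAlgebra ℚ (↥K₀ ≃ₐ[ℚ] ↥K₀))
    (hCQ : CQ = (Fintype.card (↥K₀ ≃ₐ[ℚ] ↥K₀) : ℚ)⁻¹ •
      ∑ g : ↥K₀ ≃ₐ[ℚ] ↥K₀,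
        MonoidAlgebra.single g (Algebra.trace ℚ ↥L ⟨χ g⁻¹, hmem g⁻¹⟩))
    (LR : Set ((↥K₀ ≃ₐ[ℚ] ↥K₀) → ℚ))
    (hLR : LR = {m |
      ((∑ h : ↥K₀ ≃ₐ[ℚ] ↥K₀, MonoidAlgebra.single h (m h) : MonoidAlgebra ℚ (↥K₀ ≃ₐ[ℚ] ↥K₀))
        = (∑ h : ↥K₀ ≃ₐ[ℚ] ↥K₀, MonoidAlgebra.single h (m h)) * CQ) ∧
      ((∑ h : ↥K₀ ≃ₐ[ℚ] ↥K₀, MonoidAlgebra.single h ((m h : ℂ)))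
        * (∑ g : ↥K₀ ≃ₐ[ℚ] ↥K₀, MonoidAlgebra.single (g⁻¹) ((g α : ↥K₀) : ℂ))
        : MonoidAlgebra ℂ (↥K₀ ≃ₐ[ℚ] ↥K₀)) = 0}) :
    ((∃ m ∈ LR, m ≠ 0) ↔
      ∀ d : ℤ, IsCoprime d (l : ℤ) →
        ∑ g : ↥K₀ ≃ₐ[ℚ] ↥K₀, χ g ^ d * ((g α : ↥K₀) : ℂ) = 0) ∧
    ((∀ d : ℤ, IsCoprime d (l : ℤ) →
        ∑ g : ↥K₀ ≃ₐ[ℚ] ↥K₀, χ g ^ d * ((g α : ↥K₀) : ℂ) = 0) →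
      (LR = {m | ∃ c : ↥L, ∀ g : ↥K₀ ≃ₐ[ℚ] ↥K₀,
          m g = Algebra.trace ℚ ↥L (c * ⟨χ g⁻¹, hmem g⁻¹⟩)} ∧
        Function.Injective (fun c : ↥L => fun g : ↥K₀ ≃ₐ[ℚ] ↥K₀ =>
          Algebra.trace ℚ ↥L (c * ⟨χ g⁻¹, hmem g⁻¹⟩)) ∧
        Module.finrank ℚ ↥L = Nat.totient l)) := by
  obtain ⟨g₀, hg₀⟩ := hχord
  have : NeZero l := ⟨by omega⟩
  have : IsCyclotomicExtension {l} ℚ L :=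
    hL ▸ hg₀.isCyclotomicExtension_adjoin ⟨g₀, rfl⟩ (by rintro _ ⟨g, rfl⟩; exact hχl g)
  have : FiniteDimensional ℚ L := IsCyclotomicExtension.finiteDimensional {l} ℚ L
  have : IsGalois ℚ L := IsCyclotomicExtension.isGalois {l} ℚ L
  have hirr := cyclotomic.irreducible_rat (NeZero.pos l)
  let X := χ.codRestrict L hmem
  have hXl (g) : X g ^ l = 1 := Subtype.ext (hχl g)
  have hgen : Algebra.adjoin ℚ (Set.range X) = ⊤ := top_unique <|
    (IsCyclotomicExtension.adjoin_primitive_root_eq_top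
      (IsPrimitiveRoot.coe_submonoidClass_iff.mp hg₀ : IsPrimitiveRoot (X g₀) l)).ge.trans
      (Algebra.adjoin_mono (Set.singleton_subset_iff.2 ⟨g₀, rfl⟩))
  set a : (K₀ ≃ₐ[ℚ] K₀) → ℂ := fun g => (g α : ℂ)
  have hLR' : LR = {m | m ∈ Set.range (traceCoeffs ℚ X) ∧
      ∀ k, ∑ g, algebraMap ℚ ℂ (m (k * g)) * a g = 0} := by
    rw [hLR, hCQ]
    ext m
    refine and_congr (mem_range_traceCoeffs_iff hgen m).symm ?_
    rw [sum_single_mul_sum_single_inv, sum_single_eq_zero, funext_iff]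
    simp [a]
  have hres : (∀ σ : L ≃ₐ[ℚ] L, lagrangeResolvent X a σ = 0) ↔
      ∀ d : ℤ, IsCoprime d (l : ℤ) → ∑ g, χ g ^ d * a g = 0 :=
    forall_lagrangeResolvent_eq_zero_iff hirr hXl a
  rw [← hres]
  refine ⟨⟨?_, fun hS => ?_⟩, fun hS => ⟨?_, (leftInverse_traceCoeffs hgen).injective,
    IsCyclotomicExtension.finrank L hirr⟩⟩
  · rintro ⟨m, hm, hm0⟩
    rw [hLR'] at hm
    obtain ⟨⟨c, rfl⟩, hm⟩ := hm
    refine lagrangeResolvent_eq_zero hm ?_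
    rw [linearCombination_traceCoeffs hgen]
    exact smul_ne_zero Fintype.card_ne_zero (by rintro rfl; exact hm0 (map_zero _))
  · refine ⟨traceCoeffs ℚ X 1, hLR' ▸ ⟨⟨1, rfl⟩, sum_traceCoeffs_mul_eq_zero hS 1⟩, ?_⟩
    rw [← map_zero (traceCoeffs ℚ X)]
    exact (leftInverse_traceCoeffs hgen).injective.ne one_ne_zero
  · rw [hLR']
    ext m
    constructor
    · rintro ⟨⟨c, rfl⟩, -⟩
      exact ⟨c, fun g => rfl⟩
    · rintro ⟨c, hc⟩
      obtain rfl : m = traceCoeffs ℚ X c := funext hc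
      exact ⟨⟨c, rfl⟩, sum_traceCoeffs_mul_eq_zero hS c⟩

theorem stmt_10 (K₀ : IntermediateField ℚ ℂ) [FiniteDimensional ℚ ↥K₀] [IsGalois ℚ ↥K₀]
    (α : ↥K₀) (hα : IntermediateField.adjoin ℚ {α} = ⊤)
    (l : ℕ) (hl : 1 < l)
    (χ : (↥K₀ ≃ₐ[ℚ] ↥K₀) →* ℂ)
    (hχl : ∀ g, χ g ^ l = 1)
    (hχord : ∃ g, IsPrimitiveRoot (χ g) l)
    (L : IntermediateField ℚ ℂ)
    (hL : L = IntermediateField.adjoin ℚ (Set.range χ))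
    (hmem : ∀ g, χ g ∈ L)
    (CQ : MonoidAlgebra ℚ (↥K₀ ≃ₐ[ℚ] ↥K₀))
    (hCQ : CQ = (Fintype.card (↥K₀ ≃ₐ[ℚ] ↥K₀) : ℚ)⁻¹ •
      ∑ g : ↥K₀ ≃ₐ[ℚ] ↥K₀,
        MonoidAlgebra.single g (Algebra.trace ℚ ↥L ⟨χ g⁻¹, hmem g⁻¹⟩))
    (LR : Set ((↥K₀ ≃ₐ[ℚ] ↥K₀) → ℚ))
    (hLR : LR = {m |
      ((∑ h : ↥K₀ ≃ₐ[ℚ] ↥K₀, MonoidAlgebra.single h (m h) : MonoidAlgebra ℚ (↥K₀ ≃ₐ[ℚ] ↥K₀))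
        = (∑ h : ↥K₀ ≃ₐ[ℚ] ↥K₀, MonoidAlgebra.single h (m h)) * CQ) ∧
      ((∑ h : ↥K₀ ≃ₐ[ℚ] ↥K₀, MonoidAlgebra.single h ((m h : ℂ)))
        * (∑ g : ↥K₀ ≃ₐ[ℚ] ↥K₀, MonoidAlgebra.single (g⁻¹) ((g α : ↥K₀) : ℂ))
        : MonoidAlgebra ℂ (↥K₀ ≃ₐ[ℚ] ↥K₀)) = 0}) :
    ((∃ m ∈ LR, m ≠ 0) ↔
      ∀ d : ℤ, IsCoprime d (l : ℤ) →
        ∑ g : ↥K₀ ≃ₐ[ℚ] ↥K₀, χ g ^ d * ((g α : ↥K₀) : ℂ) = 0) ∧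
    ((∀ d : ℤ, IsCoprime d (l : ℤ) →
        ∑ g : ↥K₀ ≃ₐ[ℚ] ↥K₀, χ g ^ d * ((g α : ↥K₀) : ℂ) = 0) →
      (LR = {m | ∃ c : ↥L, ∀ g : ↥K₀ ≃ₐ[ℚ] ↥K₀,
          m g = Algebra.trace ℚ ↥L (c * ⟨χ g⁻¹, hmem g⁻¹⟩)} ∧
        Function.Injective (fun c : ↥L => fun g : ↥K₀ ≃ₐ[ℚ] ↥K₀ =>
          Algebra.trace ℚ ↥L (c * ⟨χ g⁻¹, hmem g⁻¹⟩)) ∧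
        Module.finrank ℚ ↥L = Nat.totient l)) :=
  stmt_10_general K₀ α l hl χ hχl hχord L hL hmem CQ hCQ LR hLR
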